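/- For positive definite matrices A, B, the logarithmic mean AλB = ∫₀¹ A #ₜ B dt satisfies (A⁻¹∇B⁻¹)⁻¹ = 2(A⁻¹+B⁻¹)⁻¹ ≤ AλB ≤ (A+B)/2, where A #ₜ B = A^(1/2)(A^(-1/2)BA^(-1/2))^t A^(1/2) is the weighted geometric mean. -/

import Mathlib

open Matrix
open scoped ComplexOrder

/-- The weighted geometric mean `A #ₜ B = A^{1/2} (A^{-1/2} B A^{-1/2})^t A^{1/2}`. -/
noncomputable def geomMean {m : ℕ} (t : ℝ) (A B : Matrix (Fin m) (Fin m) ℂ) :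
    Matrix (Fin m) (Fin m) ℂ :=
  cfc Real.sqrt A *
    cfc (fun x : ℝ => x ^ t) (cfc (fun x => (Real.sqrt x)⁻¹) A * B * cfc (fun x => (Real.sqrt x)⁻¹) A) *
    cfc Real.sqrt A

/-!
Write `A^{-1/2} B A^{-1/2} = U diag(μ) U*` with `U` unitary and put `T = A^{1/2} U`. Then
`A = T T*`, `B = T diag(μ) T*`, `A #ₜ B = T diag(μᵗ) T*` and
`(A⁻¹ + B⁻¹)⁻¹ = T diag(μ / (1 + μ)) T*`, so the integral of `A #ₜ B` is `T diag(L μ) T*` with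
`L x = ∫₀¹ xᵗ dt`. Congruence by `T` preserves positive semidefiniteness, so everything reduces to
the scalar chain `2x / (1 + x) ≤ √x ≤ L x ≤ (1 + x) / 2` for `x > 0`. The two inner inequalities
come from integrating the tangent line of the convex function `t ↦ xᵗ` at `t = 1/2` and its chord
over `[0, 1]`.
-/

open MeasureTheory Set
open scoped MatrixOrder

namespace Real

lemma integral_Icc_zero_one_add_mul (a b : ℝ) : ∫ t in Icc (0:ℝ) 1, (a + b * t) = a + b / 2 := by
  rw [integral_Icc_eq_integral_Ioc, ← intervalIntegral.integral_of_le zero_le_one,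
    intervalIntegral.integral_add intervalIntegrable_const
      ((by fun_prop : Continuous fun t : ℝ => b * t).intervalIntegrable _ _),
    intervalIntegral.integral_const_mul, integral_id]
  simp only [intervalIntegral.integral_const, sub_zero, one_smul, one_pow, ne_eq,
    OfNat.ofNat_ne_zero, not_false_eq_true, zero_pow]
  ring

variable {x : ℝ}

lemma sqrt_mul_one_add_le_rpow (hx : 0 < x) (t : ℝ) :
    √x * (1 + log x * (t - 1 / 2)) ≤ x ^ t := by
  have hsplit : x ^ t = √x * exp (log x * (t - 1 / 2)) := by
    rw [sqrt_eq_rpow, rpow_def_of_pos hx, rpow_def_of_pos hx, ← exp_add]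
    ring_nf
  rw [hsplit, add_comm 1]
  exact mul_le_mul_of_nonneg_left (add_one_le_exp _) (sqrt_nonneg x)

lemma sqrt_le_integral_rpow (hx : 0 < x) : √x ≤ ∫ t in Icc (0:ℝ) 1, x ^ t :=
  calc √x = ∫ t in Icc (0:ℝ) 1, ((√x - √x * log x / 2) + √x * log x * t) := by
        rw [integral_Icc_zero_one_add_mul]; ring
    _ ≤ ∫ t in Icc (0:ℝ) 1, x ^ t := by
        refine setIntegral_mono_on (by fun_prop : Continuous _).integrableOn_Icc
          (continuous_const_rpow hx.ne').integrableOn_Icc measurableSet_Icc fun t _ => ?_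
        linarith [sqrt_mul_one_add_le_rpow hx t]

lemma integral_rpow_le_add_div_two (hx : 0 < x) : ∫ t in Icc (0:ℝ) 1, x ^ t ≤ (1 + x) / 2 :=
  calc ∫ t in Icc (0:ℝ) 1, x ^ t ≤ ∫ t in Icc (0:ℝ) 1, (1 + (x - 1) * t) := by
        refine setIntegral_mono_on (continuous_const_rpow hx.ne').integrableOn_Icc
          (by fun_prop : Continuous _).integrableOn_Icc measurableSet_Icc fun t ht => ?_
        have := rpow_one_add_le_one_add_mul_self (s := x - 1) (by linarith) ht.1 ht.2
        simpa [mul_comm] using this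
    _ = (1 + x) / 2 := by rw [integral_Icc_zero_one_add_mul]; ring

lemma two_mul_inv_one_add_inv_le_sqrt (hx : 0 < x) : 2 * (1 + x⁻¹)⁻¹ ≤ √x := by
  obtain ⟨s, hs, rfl⟩ : ∃ s, 0 < s ∧ s ^ 2 = x := ⟨√x, sqrt_pos.2 hx, sq_sqrt hx.le⟩
  rw [sqrt_sq hs.le, show (1 + (s ^ 2)⁻¹)⁻¹ = s ^ 2 / (s ^ 2 + 1) by field_simp,
    ← mul_div_assoc, div_le_iff₀ (by positivity)]
  nlinarith [sq_nonneg (s - 1)]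

end Real

namespace Matrix

variable {n 𝕜 : Type*} [Fintype n] [DecidableEq n] [RCLike 𝕜]

lemma inv_real_smul {X : Matrix n n 𝕜} (hX : IsUnit X.det) {r : ℝ} (hr : r ≠ 0) :
    (r • X)⁻¹ = r⁻¹ • X⁻¹ :=
  inv_eq_left_inv (by simp [smul_smul, hr, nonsing_inv_mul _ hX])

def conjDiagonal (T : Matrix n n 𝕜) (d : n → ℝ) : Matrix n n 𝕜 :=
  T * diagonal (fun i => (d i : 𝕜)) * Tᴴ

section conjDiagonal

variable (T : Matrix n n 𝕜)

lemma conjDiagonal_add (d e : n → ℝ) :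
    conjDiagonal T d + conjDiagonal T e = conjDiagonal T (d + e) := by
  rw [conjDiagonal, conjDiagonal, conjDiagonal, ← add_mul, ← mul_add, diagonal_add]
  simp only [Pi.add_apply, RCLike.ofReal_add]

lemma conjDiagonal_sub (d e : n → ℝ) :
    conjDiagonal T d - conjDiagonal T e = conjDiagonal T (d - e) := by
  rw [conjDiagonal, conjDiagonal, conjDiagonal, ← sub_mul, ← mul_sub, diagonal_sub]
  simp only [Pi.sub_apply, RCLike.ofReal_sub]

lemma smul_conjDiagonal (r : ℝ) (d : n → ℝ) :
    r • conjDiagonal T d = conjDiagonal T (r • d) := by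
  rw [conjDiagonal, conjDiagonal, ← smul_mul_assoc, ← mul_smul_comm]
  congr 2
  ext i j
  by_cases h : i = j <;> simp [h, RCLike.real_smul_eq_coe_mul]

lemma posSemidef_conjDiagonal {d : n → ℝ} (hd : ∀ i, 0 ≤ d i) :
    (conjDiagonal T d).PosSemidef :=
  (PosSemidef.diagonal fun i => RCLike.ofReal_nonneg.2 (hd i)).mul_mul_conjTranspose_same T

lemma of_integral_conjDiagonal {X : Type*} [MeasurableSpace X] {μ : Measure X} (d : X → n → ℝ)
    (hd : ∀ k, Integrable (fun x => d x k) μ) :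
    (of fun i j => ∫ x, conjDiagonal T (d x) i j ∂μ) =
      conjDiagonal T (fun k => ∫ x, d x k ∂μ) := by
  ext i j
  simp only [conjDiagonal, mul_apply, diagonal_apply, mul_ite, mul_zero, Finset.sum_ite_eq',
    Finset.mem_univ, if_true, of_apply]
  rw [integral_finsetSum _ fun k _ => ((hd k).ofReal.const_mul _).mul_const _]
  simp only [integral_mul_const, integral_const_mul, integral_ofReal]

variable {T}

lemma conjDiagonal_inv (hT : IsUnit T) {d : n → ℝ} (hd : ∀ i, d i ≠ 0) :
    (conjDiagonal T d)⁻¹ = conjDiagonal Tᴴ⁻¹ d⁻¹ := by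
  have hTdet : IsUnit T.det := (isUnit_iff_isUnit_det T).1 hT
  have hTHdet : IsUnit Tᴴ.det := by simpa [det_conjTranspose] using hTdet
  have hdd : (fun i => (d i : 𝕜) * ((d⁻¹) i : 𝕜)) = fun _ => 1 :=
    funext fun i => by simp [hd i]
  refine inv_eq_right_inv ?_
  rw [conjDiagonal, conjDiagonal, conjTranspose_nonsing_inv, conjTranspose_conjTranspose]
  calc T * diagonal (fun i => (d i : 𝕜)) * Tᴴ * (Tᴴ⁻¹ * diagonal (fun i => ((d⁻¹) i : 𝕜)) * T⁻¹)
      = T * (diagonal (fun i => (d i : 𝕜)) * (Tᴴ * Tᴴ⁻¹) *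
          diagonal (fun i => ((d⁻¹) i : 𝕜))) * T⁻¹ := by
        simp only [mul_assoc]
    _ = 1 := by
        rw [mul_nonsing_inv _ hTHdet, mul_one, diagonal_mul_diagonal, hdd, diagonal_one, mul_one,
          mul_nonsing_inv _ hTdet]

lemma inv_add_inv_conjDiagonal (hT : IsUnit T) {d e : n → ℝ} (hd : ∀ i, 0 < d i)
    (he : ∀ i, 0 < e i) :
    ((conjDiagonal T d)⁻¹ + (conjDiagonal T e)⁻¹)⁻¹ = conjDiagonal T (d⁻¹ + e⁻¹)⁻¹ := by
  have hT' : IsUnit Tᴴ⁻¹ := by simpa [isUnit_nonsing_inv_iff] using hT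
  have hde : ∀ i, (d⁻¹ + e⁻¹) i ≠ 0 := fun i => by
    have := hd i; have := he i; simp only [Pi.add_apply, Pi.inv_apply]; positivity
  rw [conjDiagonal_inv hT fun i => (hd i).ne', conjDiagonal_inv hT fun i => (he i).ne',
    conjDiagonal_add, conjDiagonal_inv hT' hde, conjTranspose_nonsing_inv,
    conjTranspose_conjTranspose, nonsing_inv_nonsing_inv _ ((isUnit_iff_isUnit_det T).1 hT)]

end conjDiagonal

namespace PosDef

variable {A : Matrix n n 𝕜}

lemma cfc_mul_cfc_eq_one (hA : A.PosDef) {f g : ℝ → ℝ} (hfg : ∀ x, 0 < x → f x * g x = 1) :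
    cfc f A * cfc g A = 1 := by
  rw [← cfc_mul f g A (A.finite_real_spectrum.continuousOn f)
      (A.finite_real_spectrum.continuousOn g), ← cfc_one ℝ A hA.1.isSelfAdjoint]
  exact cfc_congr fun x hx => hfg x (hA.isStrictlyPositive.spectrum_pos hx)

lemma cfc_sqrt_mul_self (hA : A.PosDef) : cfc Real.sqrt A * cfc Real.sqrt A = A := by
  conv_rhs => rw [← cfc_id' ℝ A hA.1.isSelfAdjoint]
  rw [← cfc_mul _ _ A]
  exact cfc_congr fun x hx => Real.mul_self_sqrt (hA.isStrictlyPositive.spectrum_pos hx).le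

end PosDef

end Matrix

lemma exists_conjDiagonal_geomMean {m : ℕ} {A B : Matrix (Fin m) (Fin m) ℂ} (hA : A.PosDef)
    (hB : B.PosDef) :
    ∃ (T : Matrix (Fin m) (Fin m) ℂ) (μ : Fin m → ℝ), IsUnit T ∧ (∀ i, 0 < μ i) ∧
      A = conjDiagonal T 1 ∧ B = conjDiagonal T μ ∧
      ∀ t, geomMean t A B = conjDiagonal T (fun i => μ i ^ t) := by
  set S := cfc Real.sqrt A
  set R := cfc (fun x => (Real.sqrt x)⁻¹) A
  have hSR : S * R = 1 :=
    hA.cfc_mul_cfc_eq_one fun x hx => mul_inv_cancel₀ (Real.sqrt_pos.2 hx).ne'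
  have hRS : R * S = 1 :=
    hA.cfc_mul_cfc_eq_one fun x hx => inv_mul_cancel₀ (Real.sqrt_pos.2 hx).ne'
  have hS : Sᴴ = S := (cfc_predicate Real.sqrt A : IsSelfAdjoint S)
  have hR : Rᴴ = R := (cfc_predicate _ A : IsSelfAdjoint R)
  have hC : (R * B * R).PosDef := by
    simpa [hR] using
      hB.conjTranspose_mul_mul_same (mulVec_injective_iff_isUnit.2 (Units.isUnit ⟨R, S, hRS, hSR⟩))
  set U : Matrix (Fin m) (Fin m) ℂ := ↑hC.1.eigenvectorUnitary
  have hU : U * Uᴴ = 1 := Unitary.mul_star_self_of_mem (SetLike.coe_mem _)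
  have hcfc : ∀ f : ℝ → ℝ,
      S * cfc f (R * B * R) * S = conjDiagonal (S * U) (fun i => f (hC.1.eigenvalues i)) := by
    intro f
    rw [hC.1.cfc_eq, IsHermitian.cfc, Unitary.conjStarAlgAut_apply, conjDiagonal,
      conjTranspose_mul, hS]
    simp [U, mul_assoc, star_eq_conjTranspose, Function.comp_def]
  refine ⟨S * U, hC.1.eigenvalues, ?_, hC.eigenvalues_pos, ?_, ?_, fun t => hcfc _⟩
  · exact (Units.isUnit ⟨S, R, hSR, hRS⟩).mul Unitary.isUnit_coe
  · calc A = S * (U * Uᴴ) * S := by rw [hU, mul_one, hA.cfc_sqrt_mul_self]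
      _ = conjDiagonal (S * U) 1 := by simp [conjDiagonal, conjTranspose_mul, hS, mul_assoc]
  · calc B = (S * R) * B * (R * S) := by rw [hSR, hRS, one_mul, mul_one]
      _ = S * cfc id (R * B * R) * S := by
          rw [cfc_id ℝ _ hC.1.isSelfAdjoint]; simp only [mul_assoc]
      _ = _ := hcfc id

theorem stmt18 {m : ℕ} (A B : Matrix (Fin m) (Fin m) ℂ) (hA : A.PosDef) (hB : B.PosDef) :
    (((2:ℝ)⁻¹ • (A⁻¹ + B⁻¹))⁻¹ = (2:ℝ) • (A⁻¹ + B⁻¹)⁻¹) ∧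
    (Matrix.of (fun i j : Fin m => ∫ t in Set.Icc (0:ℝ) 1, geomMean t A B i j) -
      (2:ℝ) • (A⁻¹ + B⁻¹)⁻¹).PosSemidef ∧
    ((2:ℝ)⁻¹ • (A + B) -
      Matrix.of (fun i j : Fin m => ∫ t in Set.Icc (0:ℝ) 1, geomMean t A B i j)).PosSemidef := by
  obtain ⟨T, μ, hT, hμ, hAT, hBT, hG⟩ := exists_conjDiagonal_geomMean hA hB
  have hharm : (A⁻¹ + B⁻¹)⁻¹ = conjDiagonal T (1 + μ⁻¹)⁻¹ := by
    rw [hAT, hBT, inv_add_inv_conjDiagonal (d := 1) hT (fun _ => one_pos) hμ, inv_one]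
  have hlog : (of fun i j => ∫ t in Icc (0:ℝ) 1, geomMean t A B i j) =
      conjDiagonal T (fun i => ∫ t in Icc (0:ℝ) 1, μ i ^ t) := by
    simp_rw [hG]
    exact of_integral_conjDiagonal T _
      fun i => (Real.continuous_const_rpow (hμ i).ne').integrableOn_Icc
  refine ⟨?_, ?_, ?_⟩
  · have hdet : IsUnit (A⁻¹ + B⁻¹).det := (hA.inv.add hB.inv).isUnit.map detMonoidHom
    rw [inv_real_smul hdet (by norm_num), inv_inv]
  · rw [hlog, hharm, smul_conjDiagonal, conjDiagonal_sub]
    refine posSemidef_conjDiagonal T fun i => ?_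
    have := (Real.two_mul_inv_one_add_inv_le_sqrt (hμ i)).trans (Real.sqrt_le_integral_rpow (hμ i))
    simpa using this
  · rw [hlog, hAT, hBT, conjDiagonal_add, smul_conjDiagonal, conjDiagonal_sub]
    refine posSemidef_conjDiagonal T fun i => ?_
    have := Real.integral_rpow_le_add_div_two (hμ i)
    simp only [Pi.sub_apply, Pi.smul_apply, Pi.add_apply, Pi.one_apply, smul_eq_mul]
    linarith
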